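/- Suppose γ_{d,0} = 0, τ_{1,1} = τ_{2,1} = 0, A_2 > A_1, and γ_{2,0}τ_{1,0}w_{1,0} − (1−γ_{2,0})τ_{2,0}w_{2,0} > 0 (the redistribution raises the after-transfer income of the more productive agent 2). Then, holding all other parameters fixed, there exists β̄ ∈ (0,1) such that for every β_1 ∈ (0, β̄), the intervention dominates inaction: Y_1 − Y_1* > 0, even when γ_{c,0} = 1 − γ_{1,0} − γ_{2,0} > 0. -/

import Mathlib

open Set

/-- Date-0 government revenue `T0 = τ10·w1 + τ20·w2`. -/
noncomputable def T0 (w1 w2 τ10 τ20 : ℝ) : ℝ := τ10 * w1 + τ20 * w2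

/-- Closed-form equilibrium date-1 GDP with intervention in the two-agent
log-linear economy when `γd = 0` and there are no date-1 taxes
(`τ11 = τ21 = 0`); the formula is valid when `A2 > A1`. -/
noncomputable def Y1NoTax (w1 w2 β1 β2 τ10 τ20 γ10 γ20 A2 : ℝ) : ℝ :=
  A2 * (β2 * ((1 - τ20) * w2 + γ20 * T0 w1 w2 τ10 τ20) / (1 + β2) +
        β1 * ((1 - τ10) * w1 + γ10 * T0 w1 w2 τ10 τ20) / (1 + β1))

/-- Equilibrium date-1 GDP without any intervention:
`Y1* = (β2 w2/(1+β2) + β1 w1/(1+β1))·max(A1, A2)`. -/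
noncomputable def Y1star (w1 w2 β1 β2 A1 A2 : ℝ) : ℝ :=
  (β2 * w2 / (1 + β2) + β1 * w1 / (1 + β1)) * max A1 A2

/-!
With `A1 ≤ A2` the GDP gain splits as `Y1 - Y1* = A2 (β2/(1+β2) D + β1/(1+β1) S)`, where
`D = γ20 τ10 w1 - (1 - γ20) τ20 w2` and `S = γ10 T0 - τ10 w1` are the changes in after-transfer
income of agents 2 and 1. The first term is a positive constant, and the second vanishes as
`β1 → 0`, so the gain is positive for all small `β1`, whatever the sign of `S`.
-/

open Filter Topology

theorem Y1NoTax_sub_Y1star {w1 w2 β1 β2 τ10 τ20 γ10 γ20 A1 A2 : ℝ} (hA : A1 ≤ A2) :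
    Y1NoTax w1 w2 β1 β2 τ10 τ20 γ10 γ20 A2 - Y1star w1 w2 β1 β2 A1 A2 =
      A2 * (β2 / (1 + β2) * (γ20 * τ10 * w1 - (1 - γ20) * τ20 * w2) +
        β1 / (1 + β1) * (γ10 * T0 w1 w2 τ10 τ20 - τ10 * w1)) := by
  simp only [Y1NoTax, Y1star, T0, max_eq_right hA]
  ring

theorem exists_Ioo_forall_of_eventually_nhdsGT {α : Type*} [LinearOrder α] [TopologicalSpace α]
    [OrderTopology α] [DenselyOrdered α] {p : α → Prop} {a b : α} (hab : a < b)
    (h : ∀ᶠ x in 𝓝[>] a, p x) : ∃ c ∈ Ioo a b, ∀ x, a < x → x < c → p x := by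
  obtain ⟨m, ham, hmb⟩ := exists_between hab
  obtain ⟨c, ⟨hac, hcm⟩, hsub⟩ := (mem_nhdsGT_iff_exists_mem_Ioc_Ioo_subset ham).1 h
  exact ⟨c, ⟨hac, hcm.trans_lt hmb⟩, fun x hax hxc => hsub ⟨hax, hxc⟩⟩

theorem eventually_pos_add_div_one_add_mul {c : ℝ} (hc : 0 < c) (s : ℝ) :
    ∀ᶠ β in 𝓝 0, 0 < c + β / (1 + β) * s := by
  have hcont : ContinuousAt (fun β : ℝ => c + β / (1 + β) * s) 0 := by
    fun_prop (disch := norm_num)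
  exact hcont.eventually_const_lt (by simpa using hc)

theorem intervention_beats_inaction_for_low_beta1_general
    (w1 w2 β2 τ10 τ20 γ10 γ20 A1 A2 : ℝ)
    (hβ2 : β2 ∈ Set.Ioo (0 : ℝ) 1)
    (hA2 : 0 < A2) (hA : A1 < A2)
    (hfavor2 : 0 < γ20 * τ10 * w1 - (1 - γ20) * τ20 * w2) :
    ∃ βbar ∈ Set.Ioo (0 : ℝ) 1, ∀ β1 : ℝ, 0 < β1 → β1 < βbar →
      0 < Y1NoTax w1 w2 β1 β2 τ10 τ20 γ10 γ20 A2 - Y1star w1 w2 β1 β2 A1 A2 := by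
  have hgain2 : 0 < β2 / (1 + β2) * (γ20 * τ10 * w1 - (1 - γ20) * τ20 * w2) :=
    mul_pos (div_pos hβ2.1 (by linarith [hβ2.1])) hfavor2
  obtain ⟨βbar, hβbar, hsmall⟩ := exists_Ioo_forall_of_eventually_nhdsGT one_pos
    (nhdsWithin_le_nhds (eventually_pos_add_div_one_add_mul hgain2
      (γ10 * T0 w1 w2 τ10 τ20 - τ10 * w1)))
  refine ⟨βbar, hβbar, fun β1 hβ1 hβ1bar => ?_⟩
  rw [Y1NoTax_sub_Y1star hA.le]
  exact mul_pos hA2 (hsmall β1 hβ1 hβ1bar)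

/-- Proposition 4.4, point 2: intervention dominates inaction
for a low discount factor of the less productive agent: if `γd = 0`,
`τ11 = τ21 = 0`, `A2 > A1`, and the redistribution raises the after-transfer
income of the more productive agent 2, i.e.
`γ20 τ10 w1 − (1−γ20)τ20 w2 > 0`, then (all other parameters held fixed) there
exists `β̄ ∈ (0,1)` such that for every `β1 ∈ (0, β̄)` one has `Y1 − Y1* > 0`,
even when `γc0 = 1 − γ10 − γ20 > 0`. -/
theorem intervention_beats_inaction_for_low_beta1
    (w1 w2 β2 τ10 τ20 γ10 γ20 A1 A2 : ℝ)
    (hw1 : 0 < w1) (hw2 : 0 < w2) (hβ2 : β2 ∈ Set.Ioo (0 : ℝ) 1)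
    (hτ10 : τ10 ∈ Set.Ico (0 : ℝ) 1) (hτ20 : τ20 ∈ Set.Ico (0 : ℝ) 1)
    (hγ10 : γ10 ∈ Set.Icc (0 : ℝ) 1) (hγ20 : γ20 ∈ Set.Icc (0 : ℝ) 1)
    (hsum0 : γ10 + γ20 ≤ 1)
    (hA1 : 0 < A1) (hA2 : 0 < A2) (hA : A1 < A2)
    (hfavor2 : 0 < γ20 * τ10 * w1 - (1 - γ20) * τ20 * w2) :
    ∃ βbar ∈ Set.Ioo (0 : ℝ) 1, ∀ β1 : ℝ, 0 < β1 → β1 < βbar →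
      0 < Y1NoTax w1 w2 β1 β2 τ10 τ20 γ10 γ20 A2 - Y1star w1 w2 β1 β2 A1 A2 :=
  intervention_beats_inaction_for_low_beta1_general w1 w2 β2 τ10 τ20 γ10 γ20 A1 A2 hβ2 hA2 hA
    hfavor2
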